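/- arXiv:1711.01183 — 2 statements merged into one kernel-verified Lean document; each statement's English description precedes it below -/
import Mathlib

section
/- Let the assumptions (A0)–(A3) hold: (A0) for every t ∈ [0,τ] and y ∈ 𝔙 the function x ↦ G(t,x,y) attains its infimum over 𝔘 at a unique point x^{t,y}; (A1) for every t ∈ [0,τ] the set of maximisers 𝔙(t) is nonempty; (A2) for every y ∈ 𝔙 the limits lim_{t↓0} [G(t,x^{t,y},y) − G(0,x^{t,y},y)]/ℓ(t) and lim_{t↓0} [G(t,x^{0,y},y) − G(0,x^{0,y},y)]/ℓ(t) exist and are equal, with common value denoted ∂ℓG(0⁺,x^{0,y},y); (A3) for every null sequence (t_n) in (0,τ] and every sequence (y^{t_n}) with y^{t_n} ∈ 𝔙(t_n), there exist a subsequence (t_{n_k}) and an element y⁰ ∈ 𝔙(0) such that lim_{k→∞} [G(t_{n_k}, x^{t_{n_k},y^{t_{n_k}}}, y^{t_{n_k}}) − G(0, x^{t_{n_k},y^{t_{n_k}}}, y^{t_{n_k}})]/ℓ(t_{n_k}) = ∂ℓG(0⁺,x^{0,y⁰},y⁰) and lim_{k→∞} [G(t_{n_k}, x^{0,y^{t_{n_k}}},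 y^{t_{n_k}}) − G(0, x^{0,y^{t_{n_k}}}, y^{t_{n_k}})]/ℓ(t_{n_k}) = ∂ℓG(0⁺,x^{0,y⁰},y⁰). Then the limit L := lim_{t↓0} [g(t) − g(0)]/ℓ(t) exists, there is y* ∈ 𝔙(0) with L = ∂ℓG(0⁺,x^{0,y*},y*), and L ≥ ∂ℓG(0⁺,x^{0,y},y) for every y ∈ 𝔙(0); that is, d g/dℓ(0⁺) = max_{y ∈ 𝔙(0)} ∂ℓG(0⁺,x^{0,y},y). -/
open Filter Set

/-- Danskin-type theorem for max-min functions (Lemma on differentiability of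
`g(t) = sup_{y ∈ 𝔙} inf_{x ∈ 𝔘} G(t,x,y)` under assumptions (A0)–(A3)). -/
theorem stmt_0
    {U V : Type*} [Nonempty U] [Nonempty V]
    (τ : ℝ) (hτ : 0 < τ)
    (G : ℝ → U → V → ℝ)
    (ℓ : ℝ → ℝ) (hℓ0 : ℓ 0 = 0) (hℓpos : ∀ t ∈ Ioc (0 : ℝ) τ, 0 < ℓ t)
    (xmin : ℝ → V → U)
    -- (A0): for every t ∈ [0,τ] and y, `xmin t y` is the unique minimiser of x ↦ G t x y
    (hA0min : ∀ t ∈ Icc (0 : ℝ) τ, ∀ (y : V) (x : U), G t (xmin t y) y ≤ G t x y)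
    (hA0uniq : ∀ t ∈ Icc (0 : ℝ) τ, ∀ (y : V) (x : U),
        (∀ x' : U, G t x y ≤ G t x' y) → x = xmin t y)
    -- 𝔙(t): set of maximisers of 𝒢(t,·) = G t (xmin t ·) ·
    (Vmax : ℝ → Set V)
    (hVmax : ∀ t : ℝ, Vmax t = { y : V | ∀ y' : V, G t (xmin t y') y' ≤ G t (xmin t y) y })
    -- (A1)
    (hA1 : ∀ t ∈ Icc (0 : ℝ) τ, (Vmax t).Nonempty)
    -- (A2): the two limits exist and are equal, with common value dG y = ∂ℓG(0⁺, x^{0,y}, y)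
    (dG : V → ℝ)
    (hA2a : ∀ y : V,
        Tendsto (fun t => (G t (xmin t y) y - G 0 (xmin t y) y) / ℓ t)
          (nhdsWithin 0 (Ioi 0)) (nhds (dG y)))
    (hA2b : ∀ y : V,
        Tendsto (fun t => (G t (xmin 0 y) y - G 0 (xmin 0 y) y) / ℓ t)
          (nhdsWithin 0 (Ioi 0)) (nhds (dG y)))
    -- (A3)
    (hA3 : ∀ (tn : ℕ → ℝ) (yn : ℕ → V),
        (∀ n, tn n ∈ Ioc (0 : ℝ) τ) → Tendsto tn atTop (nhds 0) →
        (∀ n, yn n ∈ Vmax (tn n)) →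
        ∃ (φ : ℕ → ℕ) (y0 : V), StrictMono φ ∧ y0 ∈ Vmax 0 ∧
          Tendsto (fun k =>
              (G (tn (φ k)) (xmin (tn (φ k)) (yn (φ k))) (yn (φ k))
                - G 0 (xmin (tn (φ k)) (yn (φ k))) (yn (φ k))) / ℓ (tn (φ k)))
            atTop (nhds (dG y0)) ∧
          Tendsto (fun k =>
              (G (tn (φ k)) (xmin 0 (yn (φ k))) (yn (φ k))
                - G 0 (xmin 0 (yn (φ k))) (yn (φ k))) / ℓ (tn (φ k)))
            atTop (nhds (dG y0)))
    -- g(t) = sup_{y ∈ 𝔙} inf_{x ∈ 𝔘} G(t,x,y), attained at each maximiser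
    (g : ℝ → ℝ)
    (hg : ∀ t ∈ Icc (0 : ℝ) τ, ∀ y ∈ Vmax t, g t = G t (xmin t y) y) :
    ∃ L : ℝ,
      Tendsto (fun t => (g t - g 0) / ℓ t) (nhdsWithin 0 (Ioi 0)) (nhds L) ∧
      (∃ ystar ∈ Vmax 0, L = dG ystar) ∧
      ∀ y ∈ Vmax 0, dG y ≤ L := by
  classical
  have h0mem : (0:ℝ) ∈ Icc (0:ℝ) τ := ⟨le_refl _, hτ.le⟩
  obtain ⟨y00, hy00⟩ := hA1 0 h0mem
  have hVm : ∀ t : ℝ, ∀ y ∈ Vmax t, ∀ y' : V,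
      G t (xmin t y') y' ≤ G t (xmin t y) y := by
    intro t y hy y'
    rw [hVmax t] at hy
    exact hy y'
  -- Fact A : lower bound on the difference quotient, for any y ∈ Vmax 0
  have factA : ∀ y ∈ Vmax 0, ∀ t ∈ Ioc (0:ℝ) τ,
      (G t (xmin t y) y - G 0 (xmin t y) y) / ℓ t ≤ (g t - g 0) / ℓ t := by
    intro y hy t ht
    have htI : t ∈ Icc (0:ℝ) τ := ⟨ht.1.le, ht.2⟩
    obtain ⟨yt, hyt⟩ := hA1 t htI
    have h1 : G t (xmin t y) y ≤ g t := by
      rw [hg t htI yt hyt]; exact hVm t yt hyt y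
    have h2 : g 0 ≤ G 0 (xmin t y) y := by
      rw [hg 0 h0mem y hy]; exact hA0min 0 h0mem y (xmin t y)
    have hl := hℓpos t ht
    gcongr
  -- Fact B : upper bound on the difference quotient, via a maximiser at time t
  have factB : ∀ t ∈ Ioc (0:ℝ) τ, ∀ yt ∈ Vmax t,
      (g t - g 0) / ℓ t ≤ (G t (xmin 0 yt) yt - G 0 (xmin 0 yt) yt) / ℓ t := by
    intro t ht yt hyt
    have htI : t ∈ Icc (0:ℝ) τ := ⟨ht.1.le, ht.2⟩
    have h1 : g t ≤ G t (xmin 0 yt) yt := by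
      rw [hg t htI yt hyt]; exact hA0min t htI yt (xmin 0 yt)
    have h2 : G 0 (xmin 0 yt) yt ≤ g 0 := by
      rw [hg 0 h0mem y00 hy00]; exact hVm 0 y00 hy00 yt
    have hl := hℓpos t ht
    gcongr
  -- a reference null sequence
  set s : ℕ → ℝ := fun n => τ / (n + 1) with hs
  have hs_mem : ∀ n, s n ∈ Ioc (0:ℝ) τ := by
    intro n
    constructor
    · positivity
    · apply div_le_self hτ.le
      have : (0:ℝ) ≤ (n:ℝ) := Nat.cast_nonneg n
      linarith
  have hs_tend : Tendsto s atTop (nhds 0) := by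
    apply Tendsto.div_atTop (tendsto_const_nhds)
    exact tendsto_atTop_add_const_right atTop 1 tendsto_natCast_atTop_atTop
  choose yn hyn using fun n => hA1 (s n) ⟨(hs_mem n).1.le, (hs_mem n).2⟩
  obtain ⟨φ, y0, hφ, hy0, hlim1, hlim2⟩ := hA3 s yn hs_mem hs_tend hyn
  -- the subsequence s ∘ φ tends to 0 within (0, ∞)
  have hsφ : Tendsto (fun k => s (φ k)) atTop (nhdsWithin 0 (Ioi 0)) := by
    apply tendsto_nhdsWithin_of_tendsto_nhds_of_eventually_within
    · exact hs_tend.comp hφ.tendsto_atTop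
    · exact Eventually.of_forall fun k => (hs_mem (φ k)).1
  -- L := dG y0 is maximal among dG y, y ∈ Vmax 0
  have hmax : ∀ y ∈ Vmax 0, dG y ≤ dG y0 := by
    intro y hy
    have haseq : Tendsto (fun k =>
        (G (s (φ k)) (xmin (s (φ k)) y) y - G 0 (xmin (s (φ k)) y) y) / ℓ (s (φ k)))
        atTop (nhds (dG y)) := (hA2a y).comp hsφ
    refine le_of_tendsto_of_tendsto' haseq hlim2 fun k => ?_
    exact le_trans (factA y hy _ (hs_mem (φ k)))
      (factB _ (hs_mem (φ k)) (yn (φ k)) (hyn (φ k)))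
  refine ⟨dG y0, ?_, ⟨y0, hy0, rfl⟩, hmax⟩
  -- main convergence, via subsequences
  apply tendsto_of_subseq_tendsto
  intro ns hns
  have hns0 : Tendsto ns atTop (nhds 0) := hns.mono_right nhdsWithin_le_nhds
  have hev : ∀ᶠ n in atTop, ns n ∈ Ioc (0:ℝ) τ := by
    have h1 : ∀ᶠ n in atTop, ns n ∈ Ioi (0:ℝ) :=
      hns.eventually (eventually_mem_nhdsWithin)
    have h2 : ∀ᶠ n in atTop, ns n < τ := hns0.eventually (gt_mem_nhds hτ)
    filter_upwards [h1, h2] with n hn1 hn2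
    exact ⟨hn1, hn2.le⟩
  obtain ⟨N, hN⟩ := eventually_atTop.1 hev
  set t' : ℕ → ℝ := fun k => ns (k + N) with ht'
  have ht'_mem : ∀ k, t' k ∈ Ioc (0:ℝ) τ := fun k => hN (k + N) (Nat.le_add_left N k)
  have ht'_tend : Tendsto t' atTop (nhds 0) :=
    hns0.comp (tendsto_add_atTop_nat N)
  choose y' hy' using fun k => hA1 (t' k) ⟨(ht'_mem k).1.le, (ht'_mem k).2⟩
  obtain ⟨ψ, y0', hψ, hy0', hl1, hl2⟩ := hA3 t' y' ht'_mem ht'_tend hy'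
  have ht'ψ : Tendsto (fun k => t' (ψ k)) atTop (nhdsWithin 0 (Ioi 0)) := by
    apply tendsto_nhdsWithin_of_tendsto_nhds_of_eventually_within
    · exact ht'_tend.comp hψ.tendsto_atTop
    · exact Eventually.of_forall fun k => (ht'_mem (ψ k)).1
  -- lower sequence → dG y0, upper sequence → dG y0' ≤ dG y0
  have haseq : Tendsto (fun k =>
      (G (t' (ψ k)) (xmin (t' (ψ k)) y0) y0 - G 0 (xmin (t' (ψ k)) y0) y0) / ℓ (t' (ψ k)))
      atTop (nhds (dG y0)) := (hA2a y0).comp ht'ψ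
  have hlow : ∀ k, (G (t' (ψ k)) (xmin (t' (ψ k)) y0) y0 - G 0 (xmin (t' (ψ k)) y0) y0)
      / ℓ (t' (ψ k)) ≤ (g (t' (ψ k)) - g 0) / ℓ (t' (ψ k)) :=
    fun k => factA y0 hy0 _ (ht'_mem (ψ k))
  have hup : ∀ k, (g (t' (ψ k)) - g 0) / ℓ (t' (ψ k)) ≤
      (G (t' (ψ k)) (xmin 0 (y' (ψ k))) (y' (ψ k))
        - G 0 (xmin 0 (y' (ψ k))) (y' (ψ k))) / ℓ (t' (ψ k)) :=
    fun k => factB _ (ht'_mem (ψ k)) (y' (ψ k)) (hy' (ψ k))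
  have heq : dG y0' = dG y0 := by
    have h1 : dG y0 ≤ dG y0' :=
      le_of_tendsto_of_tendsto' haseq hl2 fun k => le_trans (hlow k) (hup k)
    exact le_antisymm (hmax y0' hy0') h1
  rw [heq] at hl2
  refine ⟨fun k => ψ k + N, ?_⟩
  exact tendsto_of_tendsto_of_tendsto_of_le_of_le haseq hl2 hlow hup
end

section
/- Assume (A0): for every t ∈ [0,τ] and y ∈ 𝔙 the function x ↦ G(t,x,y) attains its infimum over 𝔘 at a unique point x^{t,y}. Fix y ∈ 𝔙 and assume that the limits lim_{t↓0} [G(t,x^{t,y},y) − G(0,x^{t,y},y)]/ℓ(t) and lim_{t↓0} [G(t,x^{0,y},y) − G(0,x^{0,y},y)]/ℓ(t) exist and are equal, with common value ∂ℓG(0⁺,x^{0,y},y). Then lim_{t↓0} [𝒢(t,y) − 𝒢(0,y)]/ℓ(t) exists and equals ∂ℓG(0⁺,x^{0,y},y). -/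
open Filter Set

/-- Squeeze argument: if both difference quotients of `G` along the perturbed and the
unperturbed minimiser converge to the same value `dGy`, then the difference quotient of
`𝒢(t,y) = G(t, x^{t,y}, y)` converges to `dGy` as well. -/
theorem stmt_3
    {U V : Type*} [Nonempty U] [Nonempty V]
    (τ : ℝ) (hτ : 0 < τ)
    (G : ℝ → U → V → ℝ)
    (ℓ : ℝ → ℝ) (hℓ0 : ℓ 0 = 0) (hℓpos : ∀ t ∈ Ioc (0 : ℝ) τ, 0 < ℓ t)
    (xmin : ℝ → V → U)
    -- (A0): for every t ∈ [0,τ] and y, `xmin t y` is the unique minimiser of x ↦ G t x y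
    (hA0min : ∀ t ∈ Icc (0 : ℝ) τ, ∀ (y : V) (x : U), G t (xmin t y) y ≤ G t x y)
    (hA0uniq : ∀ t ∈ Icc (0 : ℝ) τ, ∀ (y : V) (x : U),
        (∀ x' : U, G t x y ≤ G t x' y) → x = xmin t y)
    (y : V) (dGy : ℝ)
    (h1 : Tendsto (fun t => (G t (xmin t y) y - G 0 (xmin t y) y) / ℓ t)
        (nhdsWithin 0 (Ioi 0)) (nhds dGy))
    (h2 : Tendsto (fun t => (G t (xmin 0 y) y - G 0 (xmin 0 y) y) / ℓ t)
        (nhdsWithin 0 (Ioi 0)) (nhds dGy)) :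
    Tendsto (fun t => (G t (xmin t y) y - G 0 (xmin 0 y) y) / ℓ t)
      (nhdsWithin 0 (Ioi 0)) (nhds dGy) := by
  have hev : ∀ᶠ t in nhdsWithin (0:ℝ) (Ioi 0), t ∈ Ioc (0:ℝ) τ := by
    filter_upwards [Ioo_mem_nhdsGT_of_mem (by simp [hτ] : (0:ℝ) ∈ Ico 0 τ)] with t ht
    exact ⟨ht.1, ht.2.le⟩
  refine tendsto_of_tendsto_of_tendsto_of_le_of_le' h1 h2 ?_ ?_
  · filter_upwards [hev] with t ht
    have hle : G 0 (xmin 0 y) y ≤ G 0 (xmin t y) y :=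
      hA0min 0 ⟨le_refl 0, hτ.le⟩ y (xmin t y)
    exact div_le_div_of_nonneg_right (by linarith) (hℓpos t ht).le
  · filter_upwards [hev] with t ht
    have hle : G t (xmin t y) y ≤ G t (xmin 0 y) y :=
      hA0min t ⟨ht.1.le, ht.2⟩ y (xmin 0 y)
    exact div_le_div_of_nonneg_right (by linarith) (hℓpos t ht).le
end
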